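/- arXiv:1403.7732 — 2 statements merged into one kernel-verified Lean document; each statement's English description precedes it below -/
import Mathlib

section
/- Let H₁, H₂ be complex Hilbert spaces, H := H₁ × H₂, and let 𝒜 = [[A, B],[C, D]] be a block operator matrix satisfying the basic assumptions, with A = A* and D = D*. Then the induced operator 𝒜 is self-adjoint if one of the following holds: (a) C is A-bounded with relative bound 0 and D(D) ⊆ D(B); (b) D(A) ⊆ D(C) and B is D-bounded with relative bound 0. -/
/-!
For `ν ≠ 0` the operators `A - iν` and `D - iν` are bijections from their domains, with
`|ν| ‖x‖ ≤ ‖(A - iν) x‖` and `‖A x‖ ≤ ‖(A - iν) x‖`. In case (a), `D(D) ⊆ D(B)` makes `B`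
`D`-bounded by the closed graph theorem, so `B (D - iν)⁻¹` stays bounded for `|ν| ≥ 1`, while
`C (A - iν)⁻¹ → 0` as `|ν| → ∞` because `C` has `A`-bound `0`. For large `|ν|` the operator
`1 - C (A - iν)⁻¹ B (D - iν)⁻¹` is then invertible by a Neumann series, and eliminating `x₁`
solves `(𝒜 - iν) x = y` for every `y`. A densely defined symmetric operator for which
`𝒜 - iμ` and `𝒜 + iμ` are both surjective is self-adjoint. Case (b) is case (a) with the two
components exchanged.
-/

open LinearPMap
open scoped LinearPMap

namespace BlockOp

variable {E F G X₁ X₂ Y₁ Y₂ : Type*}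
  [AddCommGroup E] [Module ℂ E] [AddCommGroup F] [Module ℂ F] [AddCommGroup G] [Module ℂ G]
  [AddCommGroup X₁] [Module ℂ X₁] [AddCommGroup X₂] [Module ℂ X₂]
  [AddCommGroup Y₁] [Module ℂ Y₁] [AddCommGroup Y₂] [Module ℂ Y₂]

/-- The operator on `X₁ × X₂` induced by a block operator matrix `[[A, B], [C, D]]`. -/
noncomputable def blockOp (A : X₁ →ₗ.[ℂ] Y₁) (B : X₂ →ₗ.[ℂ] Y₁)
    (C : X₁ →ₗ.[ℂ] Y₂) (D : X₂ →ₗ.[ℂ] Y₂) : (X₁ × X₂) →ₗ.[ℂ] (Y₁ × Y₂) where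
  domain := (A.domain ⊓ C.domain).prod (B.domain ⊓ D.domain)
  toFun := LinearMap.prod
    (A.toFun ∘ₗ Submodule.inclusion inf_le_left ∘ₗ
        (LinearMap.fst ℂ X₁ X₂).restrict
          (p := (A.domain ⊓ C.domain).prod (B.domain ⊓ D.domain))
          (q := A.domain ⊓ C.domain) (fun _ hx => hx.1)
      + B.toFun ∘ₗ Submodule.inclusion inf_le_left ∘ₗ
        (LinearMap.snd ℂ X₁ X₂).restrict
          (p := (A.domain ⊓ C.domain).prod (B.domain ⊓ D.domain))
          (q := B.domain ⊓ D.domain) (fun _ hx => hx.2))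
    (C.toFun ∘ₗ Submodule.inclusion inf_le_right ∘ₗ
        (LinearMap.fst ℂ X₁ X₂).restrict
          (p := (A.domain ⊓ C.domain).prod (B.domain ⊓ D.domain))
          (q := A.domain ⊓ C.domain) (fun _ hx => hx.1)
      + D.toFun ∘ₗ Submodule.inclusion inf_le_right ∘ₗ
        (LinearMap.snd ℂ X₁ X₂).restrict
          (p := (A.domain ⊓ C.domain).prod (B.domain ⊓ D.domain))
          (q := B.domain ⊓ D.domain) (fun _ hx => hx.2))

/-- A linear operator on a product space has a matrix representation if it is induced
by some block operator matrix. -/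
def HasMatrixRep (T : (X₁ × X₂) →ₗ.[ℂ] (Y₁ × Y₂)) : Prop :=
  ∃ (A : X₁ →ₗ.[ℂ] Y₁) (B : X₂ →ₗ.[ℂ] Y₁) (C : X₁ →ₗ.[ℂ] Y₂) (D : X₂ →ₗ.[ℂ] Y₂),
    T = blockOp A B C D

/-- The composition of two partially defined operators, with its natural domain
`{x ∈ D(B) : B x ∈ D(A)}`. -/
noncomputable def pcomp (A : F →ₗ.[ℂ] G) (B : E →ₗ.[ℂ] F) : E →ₗ.[ℂ] G where
  domain :=
    { carrier := {x | ∃ hx : x ∈ B.domain, B ⟨x, hx⟩ ∈ A.domain}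
      zero_mem' := ⟨B.domain.zero_mem, by
        have : (⟨0, B.domain.zero_mem⟩ : B.domain) = 0 := rfl
        rw [this, LinearPMap.map_zero]; exact A.domain.zero_mem⟩
      add_mem' := by
        rintro a b ⟨ha, ha'⟩ ⟨hb, hb'⟩
        refine ⟨add_mem ha hb, ?_⟩
        have : (⟨a + b, add_mem ha hb⟩ : B.domain) = ⟨a, ha⟩ + ⟨b, hb⟩ := rfl
        rw [this, LinearPMap.map_add]
        exact add_mem ha' hb'
      smul_mem' := by
        rintro c a ⟨ha, ha'⟩
        refine ⟨Submodule.smul_mem _ c ha, ?_⟩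
        have : (⟨c • a, Submodule.smul_mem _ c ha⟩ : B.domain) = c • (⟨a, ha⟩ : B.domain) := rfl
        rw [this, LinearPMap.map_smul]
        exact Submodule.smul_mem _ c ha' }
  toFun := A.toFun ∘ₗ LinearMap.codRestrict A.domain
      (B.toFun ∘ₗ
        { toFun := fun x => (⟨(x : E), x.2.choose⟩ : B.domain)
          map_add' := fun x y => Subtype.ext rfl
          map_smul' := fun c x => Subtype.ext rfl })
      (fun x => x.2.choose_spec)

end BlockOp

namespace BlockOp

section Transport

variable {E F G E' F' : Type*}
  [AddCommGroup E] [Module ℂ E] [AddCommGroup F] [Module ℂ F] [AddCommGroup G] [Module ℂ G]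
  [AddCommGroup E'] [Module ℂ E'] [AddCommGroup F'] [Module ℂ F']

/-- Transport a partially defined linear map along linear equivalences. -/
noncomputable def pmapCongr (e : E ≃ₗ[ℂ] E') (T : E' →ₗ.[ℂ] F') (e' : F' ≃ₗ[ℂ] F) :
    E →ₗ.[ℂ] F where
  domain := T.domain.comap (e : E →ₗ[ℂ] E')
  toFun := (e' : F' →ₗ[ℂ] F) ∘ₗ T.toFun ∘ₗ
    ((e : E →ₗ[ℂ] E').restrict (p := T.domain.comap (e : E →ₗ[ℂ] E')) (q := T.domain)
      (fun _ hx => hx))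

end Transport

section Corners

variable {X₁ X₂ Y₁ Y₂ : Type*}
  [AddCommGroup X₁] [Module ℂ X₁] [AddCommGroup X₂] [Module ℂ X₂]
  [AddCommGroup Y₁] [Module ℂ Y₁] [AddCommGroup Y₂] [Module ℂ Y₂]

/-- The upper-left corner `P₁ 𝒜 J₁` of an operator on a product space, with domain
`{x₁ : (x₁, 0) ∈ D(𝒜)}`. -/
noncomputable def corner₁₁ (T : (X₁ × X₂) →ₗ.[ℂ] (Y₁ × Y₂)) : X₁ →ₗ.[ℂ] Y₁ where
  domain := T.domain.comap (LinearMap.inl ℂ X₁ X₂)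
  toFun := LinearMap.fst ℂ Y₁ Y₂ ∘ₗ T.toFun ∘ₗ
    ((LinearMap.inl ℂ X₁ X₂).restrict (p := T.domain.comap (LinearMap.inl ℂ X₁ X₂))
      (q := T.domain) (fun _ hx => hx))

/-- The lower-left corner `P₂ 𝒜 J₁`. -/
noncomputable def corner₂₁ (T : (X₁ × X₂) →ₗ.[ℂ] (Y₁ × Y₂)) : X₁ →ₗ.[ℂ] Y₂ where
  domain := T.domain.comap (LinearMap.inl ℂ X₁ X₂)
  toFun := LinearMap.snd ℂ Y₁ Y₂ ∘ₗ T.toFun ∘ₗ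
    ((LinearMap.inl ℂ X₁ X₂).restrict (p := T.domain.comap (LinearMap.inl ℂ X₁ X₂))
      (q := T.domain) (fun _ hx => hx))

/-- The upper-right corner `P₁ 𝒜 J₂`. -/
noncomputable def corner₁₂ (T : (X₁ × X₂) →ₗ.[ℂ] (Y₁ × Y₂)) : X₂ →ₗ.[ℂ] Y₁ where
  domain := T.domain.comap (LinearMap.inr ℂ X₁ X₂)
  toFun := LinearMap.fst ℂ Y₁ Y₂ ∘ₗ T.toFun ∘ₗ
    ((LinearMap.inr ℂ X₁ X₂).restrict (p := T.domain.comap (LinearMap.inr ℂ X₁ X₂))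
      (q := T.domain) (fun _ hx => hx))

/-- The lower-right corner `P₂ 𝒜 J₂`. -/
noncomputable def corner₂₂ (T : (X₁ × X₂) →ₗ.[ℂ] (Y₁ × Y₂)) : X₂ →ₗ.[ℂ] Y₂ where
  domain := T.domain.comap (LinearMap.inr ℂ X₁ X₂)
  toFun := LinearMap.snd ℂ Y₁ Y₂ ∘ₗ T.toFun ∘ₗ
    ((LinearMap.inr ℂ X₁ X₂).restrict (p := T.domain.comap (LinearMap.inr ℂ X₁ X₂))
      (q := T.domain) (fun _ hx => hx))

end Corners

section Shift

variable {E : Type*} [AddCommGroup E] [Module ℂ E]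

/-- `T - λ`, i.e. `T - λ·I`, with domain `D(T)`. -/
noncomputable def shift (T : E →ₗ.[ℂ] E) (lam : ℂ) : E →ₗ.[ℂ] E :=
  T - (lam • (LinearMap.id : E →ₗ[ℂ] E)).toPMap ⊤

/-- The identity as a partially defined operator with full domain. -/
noncomputable def idP (E : Type*) [AddCommGroup E] [Module ℂ E] : E →ₗ.[ℂ] E :=
  (LinearMap.id : E →ₗ[ℂ] E).toPMap ⊤

end Shift

section Resolvent

variable {E : Type*} [NormedAddCommGroup E] [NormedSpace ℂ E]

/-- `R` is the (bounded, everywhere defined) inverse of `T - λ`;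
this witnesses that `λ` belongs to the resolvent set of `T`. -/
structure IsResolventAt (T : E →ₗ.[ℂ] E) (lam : ℂ) (R : E →L[ℂ] E) : Prop where
  mem : ∀ y, R y ∈ T.domain
  right_inv : ∀ y, T ⟨R y, mem y⟩ - lam • (R y) = y
  left_inv : ∀ x : T.domain, R (T x - lam • (x : E)) = x

/-- The resolvent set of `T`: those `λ ∈ ℂ` for which `T - λ` is a bijection from `D(T)`
onto the whole space with bounded inverse. -/
def resolventSet (T : E →ₗ.[ℂ] E) : Set ℂ :=
  {lam | ∃ R : E →L[ℂ] E, IsResolventAt T lam R}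

end Resolvent

section RelativeBound

variable {E F G : Type*} [NormedAddCommGroup E] [NormedSpace ℂ E]
  [NormedAddCommGroup F] [NormedSpace ℂ F] [NormedAddCommGroup G] [NormedSpace ℂ G]

/-- `S` is `T`-bounded with constants `a`, `b`:
`D(T) ⊆ D(S)` and `‖S x‖ ≤ a ‖x‖ + b ‖T x‖` on `D(T)`. -/
structure RelBound (S : E →ₗ.[ℂ] G) (T : E →ₗ.[ℂ] F) (a b : ℝ) : Prop where
  dom_le : T.domain ≤ S.domain
  bound : ∀ x : T.domain, ‖S ⟨(x : E), dom_le x.2⟩‖ ≤ a * ‖(x : E)‖ + b * ‖T x‖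

/-- `S` is `T`-bounded with relative bound `< c`. -/
def IsRelBoundedLt (S : E →ₗ.[ℂ] G) (T : E →ₗ.[ℂ] F) (c : ℝ) : Prop :=
  ∃ b, 0 ≤ b ∧ b < c ∧ ∃ a, 0 ≤ a ∧ RelBound S T a b

/-- `S` is `T`-bounded with relative bound `≤ c` (for `c = 0`: relative bound `0`). -/
def IsRelBoundedLe (S : E →ₗ.[ℂ] G) (T : E →ₗ.[ℂ] F) (c : ℝ) : Prop :=
  ∀ b, c < b → ∃ a, 0 ≤ a ∧ RelBound S T a b

end RelativeBound

section HilbertProduct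

variable {H₁ H₂ K₁ K₂ : Type*}
  [NormedAddCommGroup H₁] [InnerProductSpace ℂ H₁]
  [NormedAddCommGroup H₂] [InnerProductSpace ℂ H₂]
  [NormedAddCommGroup K₁] [InnerProductSpace ℂ K₁]
  [NormedAddCommGroup K₂] [InnerProductSpace ℂ K₂]

/-- The operator induced by a block operator matrix on the Hilbert space
`H₁ ×_{ℓ²} H₂`, i.e. `WithLp 2 (H₁ × H₂)`. -/
noncomputable def blockOpL (A : H₁ →ₗ.[ℂ] K₁) (B : H₂ →ₗ.[ℂ] K₁)
    (C : H₁ →ₗ.[ℂ] K₂) (D : H₂ →ₗ.[ℂ] K₂) :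
    WithLp 2 (H₁ × H₂) →ₗ.[ℂ] WithLp 2 (K₁ × K₂) :=
  pmapCongr (WithLp.linearEquiv 2 ℂ (H₁ × H₂)) (blockOp A B C D)
    (WithLp.linearEquiv 2 ℂ (K₁ × K₂)).symm

/-- A linear operator on `H₁ ×_{ℓ²} H₂` has a matrix representation if it is induced by
some block operator matrix. -/
def HasMatrixRepL (T : WithLp 2 (H₁ × H₂) →ₗ.[ℂ] WithLp 2 (K₁ × K₂)) : Prop :=
  ∃ (A : H₁ →ₗ.[ℂ] K₁) (B : H₂ →ₗ.[ℂ] K₁) (C : H₁ →ₗ.[ℂ] K₂) (D : H₂ →ₗ.[ℂ] K₂),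
    T = blockOpL A B C D

end HilbertProduct

section EssSelfAdjoint

variable {E : Type*} [NormedAddCommGroup E] [InnerProductSpace ℂ E] [CompleteSpace E]

/-- An operator is essentially self-adjoint if it is closable and its closure is
self-adjoint. -/
def IsEssentiallySelfAdjoint (T : E →ₗ.[ℂ] E) : Prop :=
  T.IsClosable ∧ IsSelfAdjoint T.closure

end EssSelfAdjoint

end BlockOp

open LinearPMap Complex Filter Topology Function
open scoped InnerProductSpace ComplexConjugate

namespace BlockOp

section ShiftMap

variable {E : Type*} [AddCommGroup E] [Module ℂ E]

/-- Unlike `shift T c`, whose domain is `T.domain ⊓ ⊤`, this is `T - c` on `T.domain` itself. -/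
noncomputable def shiftMap (T : E →ₗ.[ℂ] E) (c : ℂ) : T.domain →ₗ[ℂ] E :=
  T.toFun - c • T.domain.subtype

@[simp]
lemma shiftMap_apply (T : E →ₗ.[ℂ] E) (c : ℂ) (x : T.domain) :
    shiftMap T c x = T x - c • (x : E) :=
  rfl

end ShiftMap

section Adjoint

variable {E F : Type*} [NormedAddCommGroup E] [InnerProductSpace ℂ E] [CompleteSpace E]
  [NormedAddCommGroup F] [InnerProductSpace ℂ F]

lemma isFormalAdjoint_of_le_adjoint {T : F →ₗ.[ℂ] E} {S : E →ₗ.[ℂ] F}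
    (hS : Dense (S.domain : Set E)) (h : T ≤ S†) : T.IsFormalAdjoint S := fun x y => by
  rw [h.2 (y := ⟨x, h.1 x.2⟩) rfl]
  exact adjoint_isFormalAdjoint hS _ y

lemma isFormalAdjoint_self_of_isSelfAdjoint {T : E →ₗ.[ℂ] E} (hT : IsSelfAdjoint T) :
    T.IsFormalAdjoint T :=
  isFormalAdjoint_of_le_adjoint hT.dense_domain (isSelfAdjoint_def.mp hT).ge

lemma inner_shiftMap_eq_zero_iff {T : E →ₗ.[ℂ] E} (hT : Dense (T.domain : Set E)) (c : ℂ)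
    (z : E) : (∀ x, ⟪z, shiftMap T c x⟫_ℂ = 0) ↔ ∃ hz : z ∈ T†.domain, T† ⟨z, hz⟩ = conj c • z := by
  have key : ∀ x : T.domain, ⟪conj c • z, (x : E)⟫_ℂ = c * ⟪z, (x : E)⟫_ℂ := fun x => by
    rw [inner_smul_left, RCLike.conj_conj]
  simp only [shiftMap_apply, inner_sub_right, inner_smul_right, sub_eq_zero]
  constructor
  · intro h
    have hz : ∀ x : T.domain, ⟪conj c • z, (x : E)⟫_ℂ = ⟪z, T x⟫_ℂ := fun x => by rw [key, h]
    exact ⟨mem_adjoint_domain_of_exists z ⟨_, hz⟩, adjoint_apply_eq hT _ hz⟩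
  · rintro ⟨hz, hTz⟩ x
    rw [← key, ← hTz]
    exact (adjoint_isFormalAdjoint hT ⟨z, hz⟩ x).symm

end Adjoint

section Symmetric

variable {E : Type*} [NormedAddCommGroup E] [InnerProductSpace ℂ E] {T : E →ₗ.[ℂ] E}

lemma norm_shiftMap_I_sq (hT : T.IsFormalAdjoint T) (ν : ℝ) (x : T.domain) :
    ‖shiftMap T (ν * I) x‖ ^ 2 = ‖T x‖ ^ 2 + ν ^ 2 * ‖(x : E)‖ ^ 2 := by
  have hreal : (⟪T x, (x : E)⟫_ℂ).im = 0 :=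
    Complex.conj_eq_iff_im.mp (by rw [inner_conj_symm]; exact (hT x x).symm)
  rw [shiftMap_apply, @norm_sub_sq ℂ, inner_smul_right, norm_smul]
  simp [hreal, mul_pow]

lemma abs_mul_norm_le_norm_shiftMap (hT : T.IsFormalAdjoint T) (ν : ℝ) (x : T.domain) :
    |ν| * ‖(x : E)‖ ≤ ‖shiftMap T (ν * I) x‖ := by
  rw [← pow_le_pow_iff_left₀ (by positivity) (norm_nonneg _) two_ne_zero,
    norm_shiftMap_I_sq hT, mul_pow, sq_abs]
  linarith [sq_nonneg ‖T x‖]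

lemma norm_le_norm_shiftMap (hT : T.IsFormalAdjoint T) (ν : ℝ) (x : T.domain) :
    ‖T x‖ ≤ ‖shiftMap T (ν * I) x‖ := by
  rw [← pow_le_pow_iff_left₀ (norm_nonneg _) (norm_nonneg _) two_ne_zero,
    norm_shiftMap_I_sq hT]
  nlinarith [sq_nonneg ν, sq_nonneg ‖(x : E)‖]

end Symmetric

section ClosedRange

variable {E : Type*} [NormedAddCommGroup E] [NormedSpace ℂ E] [CompleteSpace E]
  {T : E →ₗ.[ℂ] E}

lemma isClosed_range_shiftMap (hT : T.IsClosed) {c : ℂ} {K : ℝ}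
    (hK : ∀ x : T.domain, ‖(x : E)‖ ≤ K * ‖shiftMap T c x‖) :
    IsClosed (LinearMap.range (shiftMap T c) : Set E) := by
  refine IsSeqClosed.isClosed fun y z hy hyz => ?_
  choose x hx using fun n => LinearMap.mem_range.mp (hy n)
  have hx_cauchy : CauchySeq fun n => (x n : E) := by
    obtain ⟨b, hb0, hb, hb_lim⟩ := cauchySeq_iff_le_tendsto_0.mp hyz.cauchySeq
    refine cauchySeq_iff_le_tendsto_0.mpr
      ⟨fun N => |K| * b N, fun N => mul_nonneg (abs_nonneg K) (hb0 N), fun n m N hn hm => ?_, ?_⟩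
    · calc dist (x n : E) (x m) = ‖((x n - x m : T.domain) : E)‖ := dist_eq_norm _ _
        _ ≤ K * ‖y n - y m‖ := by simpa only [_root_.map_sub, hx] using hK (x n - x m)
        _ ≤ |K| * b N := by
          rw [← dist_eq_norm]
          exact mul_le_mul (le_abs_self K) (hb n m N hn hm) dist_nonneg (abs_nonneg K)
    · simpa using hb_lim.const_mul |K|
  obtain ⟨ξ, hξ⟩ := cauchySeq_tendsto_of_complete hx_cauchy
  have hTx : Tendsto (fun n => T (x n)) atTop (𝓝 (z + c • ξ)) := by
    have : ∀ n, T (x n) = y n + c • (x n : E) := fun n => by rw [← hx n, shiftMap_apply]; abel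
    simpa only [this] using hyz.add (hξ.const_smul c)
  obtain ⟨w, rfl, hw⟩ := (mem_graph_iff T).mp <|
    hT.mem_of_tendsto (hξ.prodMk_nhds hTx) (.of_forall fun n => T.mem_graph (x n))
  exact ⟨w, by rw [shiftMap_apply, hw, add_sub_cancel_right]⟩

end ClosedRange

section SelfAdjoint

variable {E : Type*} [NormedAddCommGroup E] [InnerProductSpace ℂ E] [CompleteSpace E]
  {T : E →ₗ.[ℂ] E}

lemma surjective_shiftMap_of_isSelfAdjoint (hT : IsSelfAdjoint T) {ν : ℝ} (hν : ν ≠ 0) :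
    Surjective (shiftMap T (ν * I)) := by
  have hsym := isFormalAdjoint_self_of_isSelfAdjoint hT
  have hν' : 0 < |ν| := abs_pos.mpr hν
  have hK : IsClosed (LinearMap.range (shiftMap T (ν * I)) : Set E) :=
    isClosed_range_shiftMap hT.isClosed (K := |ν|⁻¹) fun x => by
      rw [inv_mul_eq_div, le_div_iff₀' hν']
      exact abs_mul_norm_le_norm_shiftMap hsym ν x
  have := hK.completeSpace_coe
  rw [← LinearMap.range_eq_top, ← Submodule.orthogonal_eq_bot_iff, Submodule.eq_bot_iff]
  intro z hz
  obtain ⟨hz', hTz⟩ := (inner_shiftMap_eq_zero_iff hT.dense_domain _ z).mp fun x =>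
    (Submodule.mem_orthogonal' _ z).mp hz _ (LinearMap.mem_range_self _ x)
  -- `z` is an eigenvector of `T = T†` with eigenvalue `conj (ν i) = -ν i`.
  have hzT : z ∈ T.domain := (isSelfAdjoint_def.mp hT).le.1 hz'
  have hzero : shiftMap T ((-ν : ℝ) * I) ⟨z, hzT⟩ = 0 := by
    rw [shiftMap_apply, ← (isSelfAdjoint_def.mp hT).le.2 (x := ⟨z, hz'⟩) rfl, hTz]
    simp
  have := abs_mul_norm_le_norm_shiftMap hsym (-ν) ⟨z, hzT⟩
  rw [hzero, norm_zero, abs_neg] at this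
  exact norm_le_zero_iff.mp (nonpos_of_mul_nonpos_right this hν')

theorem isSelfAdjoint_of_surjective_shiftMap (hd : Dense (T.domain : Set E))
    (hT : T.IsFormalAdjoint T) {c : ℂ} (h₁ : Surjective (shiftMap T c))
    (h₂ : Surjective (shiftMap T (conj c))) : IsSelfAdjoint T := by
  have hle : T ≤ T† := hT.le_adjoint hd
  have hdom : T†.domain ≤ T.domain := by
    intro z hz
    obtain ⟨x, hx⟩ := h₁ (T† ⟨z, hz⟩ - c • z)
    -- `g := z - x` satisfies `T† g = c g`, so it is orthogonal to the range of `T - conj c`.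
    set g : T†.domain := ⟨z, hz⟩ - ⟨x, hle.1 x.2⟩
    have hTx : T x = T† ⟨z, hz⟩ - c • z + c • (x : E) := by rw [← hx, shiftMap_apply]; abel
    have hg : T† g = conj (conj c) • (g : E) := by
      rw [RCLike.conj_conj, LinearPMap.map_sub, ← hle.2 (x := x) (y := ⟨x, hle.1 x.2⟩) rfl, hTx]
      simp only [g, Submodule.coe_sub, smul_sub]
      abel
    obtain ⟨v, hv⟩ := h₂ g
    have hg0 := (inner_shiftMap_eq_zero_iff hd (conj c) g).mpr ⟨g.2, hg⟩ v
    rw [hv, inner_self_eq_zero] at hg0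
    have : z = x := sub_eq_zero.mp hg0
    exact this ▸ x.2
  exact isSelfAdjoint_def.mpr (eq_of_le_of_domain_eq hle (le_antisymm hle.1 hdom)).symm

end SelfAdjoint

section ClosedGraph

variable {E F G : Type*} [NormedAddCommGroup E] [NormedSpace ℂ E]
  [NormedAddCommGroup F] [NormedSpace ℂ F] [NormedAddCommGroup G] [NormedSpace ℂ G]

lemma apply_eq_of_tendsto_of_isClosable {S : E →ₗ.[ℂ] G} (hS : S.IsClosable)
    {u : ℕ → S.domain} {x : S.domain} {y : G} (hu : Tendsto (fun n => (u n : E)) atTop (𝓝 x))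
    (hSu : Tendsto (fun n => S (u n)) atTop (𝓝 y)) : S x = y := by
  have hmem : ((x : E), y) ∈ S.closure.graph := by
    rw [← hS.graph_closure_eq_closure_graph]
    exact mem_closure_of_tendsto (hu.prodMk_nhds hSu) (.of_forall fun n => S.mem_graph (u n))
  obtain ⟨v, hv, rfl⟩ := (mem_graph_iff _).mp hmem
  exact S.le_closure.2 hv.symm

theorem exists_relBound_of_domain_le [CompleteSpace E] [CompleteSpace F] [CompleteSpace G]
    {T : E →ₗ.[ℂ] F} {S : E →ₗ.[ℂ] G} (hT : T.IsClosed) (hS : S.IsClosable)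
    (hle : T.domain ≤ S.domain) : ∃ M, 0 ≤ M ∧ RelBound S T M M := by
  have : CompleteSpace T.graph := (show IsClosed (T.graph : Set (E × F)) from hT).completeSpace_coe
  -- `x ↦ S x` is closed as a map on the Banach space `graph T`, hence bounded.
  let ι : T.graph →ₗ[ℂ] S.domain :=
    (LinearMap.fst ℂ E F ∘ₗ T.graph.subtype).codRestrict S.domain
      fun p => hle (T.mem_domain_of_mem_graph p.2)
  have hι : Continuous fun p => (ι p : E) := continuous_fst.comp continuous_subtype_val
  let Φ : T.graph →L[ℂ] G :=
    ⟨S.toFun ∘ₗ ι, (S.toFun ∘ₗ ι).continuous_of_seq_closed_graph fun u p y hu hy =>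
      (apply_eq_of_tendsto_of_isClosable hS ((hι.tendsto p).comp hu) hy).symm⟩
  refine ⟨‖Φ‖, Φ.opNorm_nonneg, hle, fun x => ?_⟩
  calc ‖S ⟨x, hle x.2⟩‖ = ‖Φ ⟨((x : E), T x), T.mem_graph x⟩‖ := rfl
    _ ≤ ‖Φ‖ * max ‖(x : E)‖ ‖T x‖ := Φ.le_opNorm _
    _ ≤ ‖Φ‖ * (‖(x : E)‖ + ‖T x‖) := by
      gcongr
      exact max_le_add_of_nonneg (norm_nonneg _) (norm_nonneg _)
    _ = ‖Φ‖ * ‖(x : E)‖ + ‖Φ‖ * ‖T x‖ := mul_add _ _ _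

end ClosedGraph

section RelativeBound

variable {E G : Type*} [NormedAddCommGroup E] [InnerProductSpace ℂ E]
  [NormedAddCommGroup G] [NormedSpace ℂ G] {T : E →ₗ.[ℂ] E} {S : E →ₗ.[ℂ] G}

lemma IsRelBoundedLe.domain_le {c : ℝ} (h : IsRelBoundedLe S T c) : T.domain ≤ S.domain :=
  let ⟨_, _, hb⟩ := h (c + 1) (lt_add_one c)
  hb.dom_le

lemma RelBound.norm_le_mul_norm_shiftMap {a b : ℝ} (hT : T.IsFormalAdjoint T)
    (hS : RelBound S T a b) (ha : 0 ≤ a) (hb : 0 ≤ b) {ν : ℝ} (hν : ν ≠ 0) (x : T.domain) :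
    ‖S ⟨x, hS.dom_le x.2⟩‖ ≤ (a / |ν| + b) * ‖shiftMap T (ν * I) x‖ := by
  have hx : a * ‖(x : E)‖ ≤ a / |ν| * ‖shiftMap T (ν * I) x‖ := by
    rw [div_mul_eq_mul_div, le_div_iff₀ (abs_pos.mpr hν), mul_assoc, mul_comm ‖_‖]
    exact mul_le_mul_of_nonneg_left (abs_mul_norm_le_norm_shiftMap hT ν x) ha
  calc ‖S ⟨x, hS.dom_le x.2⟩‖ ≤ a * ‖(x : E)‖ + b * ‖T x‖ := hS.bound x
    _ ≤ a / |ν| * ‖shiftMap T (ν * I) x‖ + b * ‖shiftMap T (ν * I) x‖ :=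
      add_le_add hx (mul_le_mul_of_nonneg_left (norm_le_norm_shiftMap hT ν x) hb)
    _ = (a / |ν| + b) * ‖shiftMap T (ν * I) x‖ := (add_mul _ _ _).symm

lemma IsRelBoundedLe.exists_norm_le_mul_norm_shiftMap (hT : T.IsFormalAdjoint T)
    (hS : IsRelBoundedLe S T 0) {ε : ℝ} (hε : 0 < ε) :
    ∃ μ : ℝ, ∀ ν : ℝ, μ ≤ |ν| → ∀ x : T.domain,
      ‖S ⟨x, hS.domain_le x.2⟩‖ ≤ ε * ‖shiftMap T (ν * I) x‖ := by
  obtain ⟨a, ha, hR⟩ := hS (ε / 2) (by positivity)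
  refine ⟨2 * a / ε + 1, fun ν hν x => ?_⟩
  have hν0 : 0 < |ν| := lt_of_lt_of_le (by positivity) hν
  have hdiv : a / |ν| ≤ ε / 2 := by
    rw [div_le_iff₀ hν0]
    calc a = ε / 2 * (2 * a / ε) := by field_simp
      _ ≤ ε / 2 * |ν| := by gcongr; linarith
  calc ‖S ⟨x, hS.domain_le x.2⟩‖ ≤ (a / |ν| + ε / 2) * ‖shiftMap T (ν * I) x‖ :=
        hR.norm_le_mul_norm_shiftMap hT ha (by positivity) (abs_pos.mp hν0) x
    _ ≤ ε * ‖shiftMap T (ν * I) x‖ := by gcongr; linarith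

end RelativeBound

section Neumann

variable {E : Type*} [NormedAddCommGroup E] [NormedSpace ℂ E] [CompleteSpace E]

lemma surjective_id_sub_of_norm_le (G : E →ₗ[ℂ] E) {K : ℝ} (hK : K < 1)
    (hG : ∀ u, ‖G u‖ ≤ K * ‖u‖) : Surjective (LinearMap.id - G : E →ₗ[ℂ] E) := by
  let G' := G.mkContinuous K hG
  have hG' : ‖G'‖ < 1 := (G.mkContinuous_norm_le' hG).trans_lt (max_lt hK one_pos)
  let U := Units.oneSub G' hG'
  intro y
  refine ⟨(↑U⁻¹ : E →L[ℂ] E) y, ?_⟩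
  have h : ((U : E →L[ℂ] E) * ↑U⁻¹) y = y := by rw [U.mul_inv]; rfl
  exact h

end Neumann

section BlockSolution

lemma exists_block_solution {𝕜 X₁ X₂ Y₁ Y₂ : Type*} [Ring 𝕜]
    [AddCommGroup X₁] [Module 𝕜 X₁] [AddCommGroup X₂] [Module 𝕜 X₂]
    [AddCommGroup Y₁] [Module 𝕜 Y₁] [AddCommGroup Y₂] [Module 𝕜 Y₂]
    (M₁ : X₁ →ₗ[𝕜] Y₁) (M₂ : X₂ →ₗ[𝕜] Y₂) (β : X₂ →ₗ[𝕜] Y₁) (γ : X₁ →ₗ[𝕜] Y₂)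
    {R₁ : Y₁ →ₗ[𝕜] X₁} {R₂ : Y₂ →ₗ[𝕜] X₂} (h₁ : M₁ ∘ₗ R₁ = LinearMap.id)
    (h₂ : M₂ ∘ₗ R₂ = LinearMap.id)
    (hS : Surjective (LinearMap.id - γ ∘ₗ R₁ ∘ₗ β ∘ₗ R₂ : Y₂ →ₗ[𝕜] Y₂)) (y₁ : Y₁) (y₂ : Y₂) :
    ∃ x₁ x₂, M₁ x₁ + β x₂ = y₁ ∧ γ x₁ + M₂ x₂ = y₂ := by
  -- Eliminating `x₁ = R₁ (y₁ - β x₂)` and substituting `x₂ = R₂ u` leaves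
  -- `u - γ R₁ β R₂ u = y₂ - γ R₁ y₁`.
  obtain ⟨u, hu⟩ := hS (y₂ - γ (R₁ y₁))
  have hR₁ := LinearMap.congr_fun h₁ (y₁ - β (R₂ u))
  have hR₂ := LinearMap.congr_fun h₂ u
  simp only [LinearMap.coe_comp, comp_apply, LinearMap.id_coe, id_eq, LinearMap.sub_apply]
    at hR₁ hR₂ hu
  refine ⟨R₁ (y₁ - β (R₂ u)), R₂ u, by rw [hR₁, sub_add_cancel], ?_⟩
  rw [hR₂, _root_.map_sub, _root_.map_sub, ← sub_eq_zero, ← sub_eq_zero.mpr hu]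
  abel

end BlockSolution

section Core

variable {H₁ H₂ : Type*}
  [NormedAddCommGroup H₁] [InnerProductSpace ℂ H₁] [CompleteSpace H₁]
  [NormedAddCommGroup H₂] [InnerProductSpace ℂ H₂] [CompleteSpace H₂]
  {A : H₁ →ₗ.[ℂ] H₁} {B : H₂ →ₗ.[ℂ] H₁} {C : H₁ →ₗ.[ℂ] H₂} {D : H₂ →ₗ.[ℂ] H₂}

theorem exists_block_solution_of_isRelBoundedLe (hA : IsSelfAdjoint A) (hD : IsSelfAdjoint D)
    (hC : IsRelBoundedLe C A 0) {a b : ℝ} (ha : 0 ≤ a) (hb : 0 ≤ b) (hB : RelBound B D a b) :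
    ∃ μ : ℝ, ∀ ν : ℝ, μ ≤ |ν| → ∀ y₁ y₂, ∃ (x₁ : A.domain) (x₂ : D.domain),
      shiftMap A (ν * I) x₁ + B ⟨x₂, hB.dom_le x₂.2⟩ = y₁ ∧
        C ⟨x₁, hC.domain_le x₁.2⟩ + shiftMap D (ν * I) x₂ = y₂ := by
  set ε := (a + b + 1)⁻¹
  obtain ⟨μ, hCA⟩ := hC.exists_norm_le_mul_norm_shiftMap
    (isFormalAdjoint_self_of_isSelfAdjoint hA) (ε := ε) (by positivity)
  refine ⟨max μ 1, fun ν hν y₁ y₂ => ?_⟩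
  have hν1 : 1 ≤ |ν| := (le_max_right _ _).trans hν
  have hν0 : ν ≠ 0 := abs_pos.mp (one_pos.trans_le hν1)
  obtain ⟨R₁, h₁⟩ := (shiftMap A (ν * I)).exists_rightInverse_of_surjective
    (LinearMap.range_eq_top.mpr (surjective_shiftMap_of_isSelfAdjoint hA hν0))
  obtain ⟨R₂, h₂⟩ := (shiftMap D (ν * I)).exists_rightInverse_of_surjective
    (LinearMap.range_eq_top.mpr (surjective_shiftMap_of_isSelfAdjoint hD hν0))
  let β := B.toFun ∘ₗ Submodule.inclusion hB.dom_le
  let γ := C.toFun ∘ₗ Submodule.inclusion hC.domain_le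
  have hβ : ∀ u, ‖β (R₂ u)‖ ≤ (a + b) * ‖u‖ := fun u => by
    have hu : shiftMap D (ν * I) (R₂ u) = u := LinearMap.congr_fun h₂ u
    calc ‖β (R₂ u)‖ ≤ (a / |ν| + b) * ‖shiftMap D (ν * I) (R₂ u)‖ :=
          hB.norm_le_mul_norm_shiftMap (isFormalAdjoint_self_of_isSelfAdjoint hD) ha hb hν0 _
      _ ≤ (a + b) * ‖u‖ := by rw [hu]; gcongr; exact div_le_self ha hν1
  have hγ : ∀ w, ‖γ (R₁ w)‖ ≤ ε * ‖w‖ := fun w => by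
    have hw : shiftMap A (ν * I) (R₁ w) = w := LinearMap.congr_fun h₁ w
    have := hCA ν ((le_max_left _ _).trans hν) (R₁ w)
    rwa [hw] at this
  have hG : ∀ u, ‖(γ ∘ₗ R₁ ∘ₗ β ∘ₗ R₂) u‖ ≤ (a + b) * ε * ‖u‖ := fun u =>
    calc ‖γ (R₁ (β (R₂ u)))‖ ≤ ε * ‖β (R₂ u)‖ := hγ _
      _ ≤ ε * ((a + b) * ‖u‖) := by gcongr; exact hβ u
      _ = (a + b) * ε * ‖u‖ := by ring
  have hGlt : (a + b) * ε < 1 := by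
    rw [← div_eq_mul_inv, div_lt_one (by positivity)]
    linarith
  exact exists_block_solution _ _ β γ h₁ h₂ (surjective_id_sub_of_norm_le _ hGlt hG) y₁ y₂

end Core

section BlockOperator

variable {H₁ H₂ : Type*}
  [NormedAddCommGroup H₁] [InnerProductSpace ℂ H₁] [NormedAddCommGroup H₂] [InnerProductSpace ℂ H₂]
  {A : H₁ →ₗ.[ℂ] H₁} {B : H₂ →ₗ.[ℂ] H₁} {C : H₁ →ₗ.[ℂ] H₂} {D : H₂ →ₗ.[ℂ] H₂}

lemma mem_blockOpL_domain {x : WithLp 2 (H₁ × H₂)} :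
    x ∈ (blockOpL A B C D).domain ↔
      (x.fst ∈ A.domain ∧ x.fst ∈ C.domain) ∧ (x.snd ∈ B.domain ∧ x.snd ∈ D.domain) :=
  Iff.rfl

lemma blockOpL_apply (x : (blockOpL A B C D).domain) (hA : (x : WithLp 2 (H₁ × H₂)).fst ∈ A.domain)
    (hB : (x : WithLp 2 (H₁ × H₂)).snd ∈ B.domain) (hC : (x : WithLp 2 (H₁ × H₂)).fst ∈ C.domain)
    (hD : (x : WithLp 2 (H₁ × H₂)).snd ∈ D.domain) :
    blockOpL A B C D x = WithLp.toLp 2 (A ⟨_, hA⟩ + B ⟨_, hB⟩, C ⟨_, hC⟩ + D ⟨_, hD⟩) :=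
  rfl

theorem blockOpL_isFormalAdjoint (hA : A.IsFormalAdjoint A) (hBC : B.IsFormalAdjoint C)
    (hD : D.IsFormalAdjoint D) : (blockOpL A B C D).IsFormalAdjoint (blockOpL A B C D) := by
  rintro x y
  obtain ⟨⟨hxA, hxC⟩, hxB, hxD⟩ := mem_blockOpL_domain.mp x.2
  obtain ⟨⟨hyA, hyC⟩, hyB, hyD⟩ := mem_blockOpL_domain.mp y.2
  rw [blockOpL_apply x hxA hxB hxC hxD, blockOpL_apply y hyA hyB hyC hyD]
  simp only [WithLp.prod_inner_apply, WithLp.ofLp_fst, WithLp.ofLp_snd, inner_add_left,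
    inner_add_right]
  rw [hA ⟨_, hxA⟩ ⟨_, hyA⟩, hBC ⟨_, hxB⟩ ⟨_, hyC⟩, hBC.symm ⟨_, hxC⟩ ⟨_, hyB⟩,
    hD ⟨_, hxD⟩ ⟨_, hyD⟩]
  ring

lemma surjective_shiftMap_blockOpL {c : ℂ} (hAC : A.domain ≤ C.domain)
    (hDB : D.domain ≤ B.domain)
    (h : ∀ y₁ y₂, ∃ (x₁ : A.domain) (x₂ : D.domain),
      shiftMap A c x₁ + B ⟨x₂, hDB x₂.2⟩ = y₁ ∧ C ⟨x₁, hAC x₁.2⟩ + shiftMap D c x₂ = y₂) :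
    Surjective (shiftMap (blockOpL A B C D) c) := by
  intro y
  obtain ⟨x₁, x₂, h₁, h₂⟩ := h y.fst y.snd
  refine ⟨⟨WithLp.toLp 2 ((x₁ : H₁), (x₂ : H₂)), ⟨x₁.2, hAC x₁.2⟩, hDB x₂.2, x₂.2⟩,
    WithLp.ofLp_injective 2 (Prod.ext ?_ ?_)⟩
  · change A x₁ + B ⟨x₂, hDB x₂.2⟩ - c • (x₁ : H₁) = y.fst
    rw [← h₁, shiftMap_apply, add_sub_right_comm]
  · change C ⟨x₁, hAC x₁.2⟩ + D x₂ - c • (x₂ : H₂) = y.snd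
    rw [← h₂, shiftMap_apply, add_sub_assoc]

end BlockOperator

section Surjectivity

variable {H₁ H₂ : Type*}
  [NormedAddCommGroup H₁] [InnerProductSpace ℂ H₁] [CompleteSpace H₁]
  [NormedAddCommGroup H₂] [InnerProductSpace ℂ H₂] [CompleteSpace H₂]
  {A : H₁ →ₗ.[ℂ] H₁} {B : H₂ →ₗ.[ℂ] H₁} {C : H₁ →ₗ.[ℂ] H₂} {D : H₂ →ₗ.[ℂ] H₂}

theorem exists_surjective_shiftMap_blockOpL_of_isRelBoundedLe_lowerLeft (hA : IsSelfAdjoint A)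
    (hD : IsSelfAdjoint D) (hC : IsRelBoundedLe C A 0) {a b : ℝ} (ha : 0 ≤ a) (hb : 0 ≤ b)
    (hB : RelBound B D a b) :
    ∃ μ : ℝ, ∀ ν : ℝ, μ ≤ |ν| → Surjective (shiftMap (blockOpL A B C D) (ν * I)) := by
  obtain ⟨μ, h⟩ := exists_block_solution_of_isRelBoundedLe hA hD hC ha hb hB
  exact ⟨μ, fun ν hν => surjective_shiftMap_blockOpL hC.domain_le hB.dom_le (h ν hν)⟩

theorem exists_surjective_shiftMap_blockOpL_of_isRelBoundedLe_upperRight (hA : IsSelfAdjoint A)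
    (hD : IsSelfAdjoint D) {a b : ℝ} (ha : 0 ≤ a) (hb : 0 ≤ b) (hC : RelBound C A a b)
    (hB : IsRelBoundedLe B D 0) :
    ∃ μ : ℝ, ∀ ν : ℝ, μ ≤ |ν| → Surjective (shiftMap (blockOpL A B C D) (ν * I)) := by
  obtain ⟨μ, h⟩ := exists_block_solution_of_isRelBoundedLe hD hA hB ha hb hC
  refine ⟨μ, fun ν hν => surjective_shiftMap_blockOpL hC.dom_le hB.domain_le fun y₁ y₂ => ?_⟩
  obtain ⟨x₂, x₁, h₂, h₁⟩ := h ν hν y₂ y₁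
  exact ⟨x₁, x₂, by rwa [add_comm] at h₁, by rwa [add_comm] at h₂⟩

end Surjectivity

theorem statement14_general {H₁ H₂ : Type*}
    [NormedAddCommGroup H₁] [InnerProductSpace ℂ H₁] [CompleteSpace H₁]
    [NormedAddCommGroup H₂] [InnerProductSpace ℂ H₂] [CompleteSpace H₂]
    (A : H₁ →ₗ.[ℂ] H₁) (B : H₂ →ₗ.[ℂ] H₁) (C : H₁ →ₗ.[ℂ] H₂) (D : H₂ →ₗ.[ℂ] H₂)
    (hAd : Dense (A.domain : Set H₁))
    (hCd : Dense (C.domain : Set H₁)) (hDd : Dense (D.domain : Set H₂))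
    (hBc : B.IsClosable) (hCc : C.IsClosable)
    (hAsym : A ≤ A.adjoint) (hBC : B ≤ C.adjoint) (hDsym : D ≤ D.adjoint)
    (hdense : Dense ((blockOpL A B C D).domain : Set (WithLp 2 (H₁ × H₂))))
    (hA : IsSelfAdjoint A) (hD : IsSelfAdjoint D)
    (h : (IsRelBoundedLe C A 0 ∧ D.domain ≤ B.domain) ∨
         (A.domain ≤ C.domain ∧ IsRelBoundedLe B D 0)) :
    IsSelfAdjoint (blockOpL A B C D) := by
  obtain ⟨μ, hsurj⟩ :
      ∃ μ : ℝ, ∀ ν : ℝ, μ ≤ |ν| → Surjective (shiftMap (blockOpL A B C D) (ν * I)) := by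
    rcases h with ⟨hC, hDB⟩ | ⟨hAC, hB⟩
    · obtain ⟨M, hM, hBD⟩ := exists_relBound_of_domain_le hD.isClosed hBc hDB
      exact exists_surjective_shiftMap_blockOpL_of_isRelBoundedLe_lowerLeft hA hD hC hM hM hBD
    · obtain ⟨M, hM, hCA⟩ := exists_relBound_of_domain_le hA.isClosed hCc hAC
      exact exists_surjective_shiftMap_blockOpL_of_isRelBoundedLe_upperRight hA hD hM hM hCA hB
  have hsym := blockOpL_isFormalAdjoint (isFormalAdjoint_of_le_adjoint hAd hAsym)
    (isFormalAdjoint_of_le_adjoint hCd hBC) (isFormalAdjoint_of_le_adjoint hDd hDsym)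
  have hconj : conj ((μ : ℂ) * I) = ((-μ : ℝ) : ℂ) * I := by simp
  refine isSelfAdjoint_of_surjective_shiftMap hdense hsym (hsurj μ (le_abs_self μ)) ?_
  rw [hconj]
  exact hsurj (-μ) (by rw [abs_neg]; exact le_abs_self μ)

theorem statement14 {H₁ H₂ : Type*}
    [NormedAddCommGroup H₁] [InnerProductSpace ℂ H₁] [CompleteSpace H₁]
    [NormedAddCommGroup H₂] [InnerProductSpace ℂ H₂] [CompleteSpace H₂]
    (A : H₁ →ₗ.[ℂ] H₁) (B : H₂ →ₗ.[ℂ] H₁) (C : H₁ →ₗ.[ℂ] H₂) (D : H₂ →ₗ.[ℂ] H₂)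
    (hAd : Dense (A.domain : Set H₁)) (hBd : Dense (B.domain : Set H₂))
    (hCd : Dense (C.domain : Set H₁)) (hDd : Dense (D.domain : Set H₂))
    (hAc : A.IsClosable) (hBc : B.IsClosable) (hCc : C.IsClosable) (hDc : D.IsClosable)
    (hAsym : A ≤ A.adjoint) (hBC : B ≤ C.adjoint) (hDsym : D ≤ D.adjoint)
    (hdense : Dense ((blockOpL A B C D).domain : Set (WithLp 2 (H₁ × H₂))))
    (hA : IsSelfAdjoint A) (hD : IsSelfAdjoint D)
    (h : (IsRelBoundedLe C A 0 ∧ D.domain ≤ B.domain) ∨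
         (A.domain ≤ C.domain ∧ IsRelBoundedLe B D 0)) :
    IsSelfAdjoint (blockOpL A B C D) :=
  statement14_general A B C D hAd hCd hDd hBc hCc hAsym hBC hDsym hdense hA hD h

end BlockOp
end

section
/- Let H be a complex Hilbert space and let 𝒜 = [[A, B],[B*, D]] be a block operator matrix on H × H satisfying the basic assumptions with C = B*. Suppose B is closed with nonempty resolvent set ρ(B) and D(𝒜) = D(B*) × D(B) (i.e., D(B*) ⊆ D(A) and D(B) ⊆ D(D)). Then the following are equivalent: (a) the induced operator 𝒜 is self-adjoint; (b) there exists λ ∈ ρ(B) with (B − A(B*−λ̄)⁻¹D)* = B* − D(B−λ)⁻¹A; (c) there exists λ ∈ ρ(B) with (B* − D(B−λ)⁻¹A)* = B − A(B*−λ̄)⁻¹D. Moreover, if (b) or (c) holds for some λ ∈ ρ(B), it holds for every λ ∈ ρ(B). -/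
/-!
Let `R = (B - λ)⁻¹`, `S = (B* - λ̄)⁻¹`, `T₁ = B - A S D` and `T₂ = B* - D R A`; then
`D(T₁) = D(B)`, `D(T₂) = D(B*)`, and moving `A`, `D` and the resolvents across the inner product
shows `T₂ ⊆ T₁*`. So (b) amounts to `D(T₁*) ⊆ D(B*)`, and this is equivalent to `D(𝒜*) ⊆ D(𝒜)`,
i.e. to self-adjointness of the symmetric operator `𝒜`:

* if `𝒜*(u, v) = (f, g)`, testing against `(S z, 0)` gives `⟪u, A S z⟫ = ⟪R (f - λ v) - v, z⟫`,
  and testing against `(0, y)` then shows `u ∈ D(T₁*) ⊆ D(B*)`; finally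
  `v = R (f - λ v) - R A u ∈ D(B)`;
* if `u ∈ D(T₁*)`, the operator `A S` is bounded by the closed graph theorem, and
  `(u, -(A S)* u) ∈ D(𝒜*)`, so `u ∈ D(B*)` whenever `D(𝒜*) ⊆ D(𝒜)`.

Neither argument depends on `λ`. Criterion (c) is criterion (b) for `[[D, B*], [B, A]]`, for which
`D(𝒜*) ⊆ D(𝒜)` reads the same with the two components exchanged.
-/

open LinearPMap
open scoped LinearPMap

open scoped InnerProductSpace ComplexConjugate

namespace LinearPMap

section ClosedGraph

variable {E F G : Type*} [NormedAddCommGroup E] [NormedSpace ℂ E] [CompleteSpace E]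
  [NormedAddCommGroup F] [NormedSpace ℂ F] [NormedAddCommGroup G] [NormedSpace ℂ G]
  [CompleteSpace G] {T : F →ₗ.[ℂ] G}

theorem IsClosable.continuous_comp_clm (hT : T.IsClosable) (S : E →L[ℂ] F)
    (hS : ∀ z, S z ∈ T.domain) :
    Continuous (T.toFun ∘ₗ (S : E →ₗ[ℂ] F).codRestrict T.domain hS) := by
  obtain ⟨U, hU, hTU⟩ := isClosable_iff_exists_closed_extension.mp hT
  apply LinearMap.continuous_of_isClosed_graph
  have hgraph : ((T.toFun ∘ₗ (S : E →ₗ[ℂ] F).codRestrict T.domain hS).graph : Set (E × G)) =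
      Prod.map S id ⁻¹' U.graph := by
    ext ⟨x, y⟩
    simp only [SetLike.mem_coe, LinearMap.mem_graph_iff, Set.mem_preimage, Prod.map_apply,
      id_eq, LinearPMap.mem_graph_iff]
    constructor
    · rintro rfl
      exact ⟨⟨S x, hTU.1 (hS x)⟩, rfl, (hTU.2 rfl).symm⟩
    · rintro ⟨z, hz, rfl⟩
      exact (hTU.2 (x := ⟨S x, hS x⟩) hz.symm).symm
  rw [hgraph]
  exact hU.preimage (S.continuous.prodMap continuous_id)

noncomputable def IsClosable.compCLM (hT : T.IsClosable) (S : E →L[ℂ] F)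
    (hS : ∀ z, S z ∈ T.domain) : E →L[ℂ] G :=
  ⟨T.toFun ∘ₗ (S : E →ₗ[ℂ] F).codRestrict T.domain hS, hT.continuous_comp_clm S hS⟩

theorem IsClosable.compCLM_apply (hT : T.IsClosable) (S : E →L[ℂ] F)
    (hS : ∀ z, S z ∈ T.domain) (z : E) : hT.compCLM S hS z = T ⟨S z, hS z⟩ :=
  rfl

end ClosedGraph

section Adjoint

variable {E F : Type*} [NormedAddCommGroup E] [InnerProductSpace ℂ E] [CompleteSpace E]
  [NormedAddCommGroup F] [InnerProductSpace ℂ F]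

theorem isFormalAdjoint_of_le_adjoint {T : E →ₗ.[ℂ] F} {S : F →ₗ.[ℂ] E}
    (hT : Dense (T.domain : Set E)) (h : S ≤ T†) : S.IsFormalAdjoint T := fun x y => by
  rw [h.2 (y := ⟨x, h.1 x.2⟩) rfl]
  exact adjoint_isFormalAdjoint hT _ y

theorem isSelfAdjoint_iff_adjoint_domain_le {T : E →ₗ.[ℂ] E} (hT : Dense (T.domain : Set E))
    (hsymm : T.IsFormalAdjoint T) : IsSelfAdjoint T ↔ T†.domain ≤ T.domain := by
  have hle : T ≤ T† := hsymm.le_adjoint hT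
  refine ⟨fun h => (congrArg domain (isSelfAdjoint_def.mp h)).le, fun h => ?_⟩
  exact isSelfAdjoint_def.mpr (eq_of_le_of_domain_eq hle (le_antisymm hle.1 h)).symm

end Adjoint

end LinearPMap

namespace BlockOp

section Resolvent

variable {E : Type*} [NormedAddCommGroup E] [InnerProductSpace ℂ E]
  {B C : E →ₗ.[ℂ] E} {lam : ℂ} {R S : E →L[ℂ] E}

theorem IsResolventAt.apply_resolvent_eq (hR : IsResolventAt B lam R) (y : E) :
    B ⟨R y, hR.mem y⟩ = y + lam • R y :=
  sub_eq_iff_eq_add.mp (hR.right_inv y)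

theorem IsResolventAt.inner_resolvent_left (hCB : C.IsFormalAdjoint B)
    (hR : IsResolventAt B lam R) (hS : IsResolventAt C (conj lam) S) (w z : E) : ⟪R w, z⟫_ℂ = ⟪w, S z⟫_ℂ := by
  have hBC : ⟪B ⟨R w, hR.mem w⟩, S z⟫_ℂ = ⟪R w, C ⟨S z, hS.mem z⟩⟫_ℂ :=
    hCB.symm ⟨R w, hR.mem w⟩ ⟨S z, hS.mem z⟩
  rw [hR.apply_resolvent_eq, hS.apply_resolvent_eq, inner_add_left, inner_add_right,
    inner_smul_left, inner_smul_right] at hBC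
  exact (add_right_cancel hBC).symm

theorem IsResolventAt.adjoint [CompleteSpace E] (hB : Dense (B.domain : Set E))
    (hR : IsResolventAt B lam R) : IsResolventAt B† (conj lam) R.adjoint := by
  have hRB : ∀ x : B.domain, R (B x) = x + lam • R x := fun x => by
    have h := hR.left_inv x
    rw [_root_.map_sub, _root_.map_smul] at h
    exact sub_eq_iff_eq_add.mp h
  have hinner : ∀ y (x : B.domain),
      ⟪y + conj lam • R.adjoint y, (x : E)⟫_ℂ = ⟪R.adjoint y, B x⟫_ℂ := fun y x => by
    rw [inner_add_left, inner_smul_left, Complex.conj_conj,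
      ContinuousLinearMap.adjoint_inner_left, ContinuousLinearMap.adjoint_inner_left, hRB,
      inner_add_right, inner_smul_right]
  have hmem : ∀ y, R.adjoint y ∈ B†.domain := fun y =>
    mem_adjoint_domain_of_exists _ ⟨_, hinner y⟩
  have happly : ∀ y, B† ⟨R.adjoint y, hmem y⟩ = y + conj lam • R.adjoint y := fun y =>
    adjoint_apply_eq hB _ (hinner y)
  refine ⟨hmem, fun y => by rw [happly]; abel, fun x => ?_⟩
  refine ext_inner_left ℂ fun v => ?_
  have hBR : ⟪R v, B† x⟫_ℂ = ⟪v, (x : E)⟫_ℂ + conj lam * ⟪R v, (x : E)⟫_ℂ := by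
    rw [← inner_conj_symm, adjoint_isFormalAdjoint hB x ⟨R v, hR.mem v⟩, inner_conj_symm,
      hR.apply_resolvent_eq, inner_add_left, inner_smul_left]
  rw [ContinuousLinearMap.adjoint_inner_right, inner_sub_right, inner_smul_right, hBR]
  ring

end Resolvent

section BlockMatrix

variable {H : Type*} [NormedAddCommGroup H] [InnerProductSpace ℂ H] {A B C D : H →ₗ.[ℂ] H}

/-- `f = K* (u, v)` for the column operator `K x = (A x, C x)` with domain `D(A) ∩ D(C)`. -/
def ColumnAdjointEq (A C : H →ₗ.[ℂ] H) (u v f : H) : Prop :=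
  ∀ x (hxA : x ∈ A.domain) (hxC : x ∈ C.domain),
    ⟪f, x⟫_ℂ = ⟪u, A ⟨x, hxA⟩⟫_ℂ + ⟪v, C ⟨x, hxC⟩⟫_ℂ

/-- `D(𝒜*) ⊆ D(𝒜)` for `𝒜 = [[A, B], [C, D]]` (see `isSelfAdjoint_blockOpL_iff`), written through
`ColumnAdjointEq` so that it is invariant under `(A, B, C, D) ↦ (D, C, B, A)`. -/
def BlockAdjointDomainLe (A B C D : H →ₗ.[ℂ] H) : Prop :=
  ∀ u v f g, ColumnAdjointEq A C u v f → ColumnAdjointEq D B v u g →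
    (u ∈ A.domain ∧ u ∈ C.domain) ∧ (v ∈ B.domain ∧ v ∈ D.domain)

theorem BlockAdjointDomainLe.swap (h : BlockAdjointDomainLe A B C D) :
    BlockAdjointDomainLe D C B A := fun v u g f hg hf =>
  let ⟨⟨huA, huC⟩, ⟨hvB, hvD⟩⟩ := h u v f g hf hg
  ⟨⟨hvD, hvB⟩, ⟨huC, huA⟩⟩

theorem blockAdjointDomainLe_swap_iff :
    BlockAdjointDomainLe D C B A ↔ BlockAdjointDomainLe A B C D :=
  ⟨.swap, .swap⟩

theorem toLp_mem_domain_blockOpL_iff {x₁ x₂ : H} :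
    WithLp.toLp 2 (x₁, x₂) ∈ (blockOpL A B C D).domain ↔
      (x₁ ∈ A.domain ∧ x₁ ∈ C.domain) ∧ (x₂ ∈ B.domain ∧ x₂ ∈ D.domain) :=
  Iff.rfl

theorem isFormalAdjoint_blockOpL (hA : A.IsFormalAdjoint A) (hD : D.IsFormalAdjoint D)
    (hCB : C.IsFormalAdjoint B) :
    (blockOpL A B C D).IsFormalAdjoint (blockOpL A B C D) := by
  rintro ⟨⟨x₁, x₂⟩, hx⟩ ⟨⟨y₁, y₂⟩, hy⟩
  obtain ⟨⟨hx₁A, hx₁C⟩, hx₂B, hx₂D⟩ := toLp_mem_domain_blockOpL_iff.mp hx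
  obtain ⟨⟨hy₁A, hy₁C⟩, hy₂B, hy₂D⟩ := toLp_mem_domain_blockOpL_iff.mp hy
  show ⟪A ⟨x₁, hx₁A⟩ + B ⟨x₂, hx₂B⟩, y₁⟫_ℂ + ⟪C ⟨x₁, hx₁C⟩ + D ⟨x₂, hx₂D⟩, y₂⟫_ℂ =
    ⟪x₁, A ⟨y₁, hy₁A⟩ + B ⟨y₂, hy₂B⟩⟫_ℂ + ⟪x₂, C ⟨y₁, hy₁C⟩ + D ⟨y₂, hy₂D⟩⟫_ℂ
  rw [inner_add_left, inner_add_left, inner_add_right, inner_add_right,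
    hA ⟨_, hx₁A⟩ ⟨_, hy₁A⟩, hCB.symm ⟨_, hx₂B⟩ ⟨_, hy₁C⟩, hCB ⟨_, hx₁C⟩ ⟨_, hy₂B⟩,
    hD ⟨_, hx₂D⟩ ⟨_, hy₂D⟩]
  ring

variable [CompleteSpace H]

theorem adjoint_blockOpL_columnAdjointEq
    (hdense : Dense ((blockOpL A B C D).domain : Set (WithLp 2 (H × H)))) {u v : H}
    (hp : WithLp.toLp 2 (u, v) ∈ (blockOpL A B C D)†.domain) :
    ColumnAdjointEq A C u v ((blockOpL A B C D)† ⟨_, hp⟩).ofLp.1 ∧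
      ColumnAdjointEq D B v u ((blockOpL A B C D)† ⟨_, hp⟩).ofLp.2 := by
  set w := (blockOpL A B C D)† ⟨_, hp⟩
  have h := adjoint_isFormalAdjoint hdense ⟨_, hp⟩
  constructor
  · intro x hxA hxC
    have hx : ⟪w.ofLp.1, x⟫_ℂ + ⟪w.ofLp.2, 0⟫_ℂ =
        ⟪u, A ⟨x, hxA⟩ + B 0⟫_ℂ + ⟪v, C ⟨x, hxC⟩ + D 0⟫_ℂ :=
      h ⟨WithLp.toLp 2 (x, 0), ⟨⟨hxA, hxC⟩, ⟨B.domain.zero_mem, D.domain.zero_mem⟩⟩⟩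
    simpa using hx
  · intro y hyD hyB
    have hy : ⟪w.ofLp.1, 0⟫_ℂ + ⟪w.ofLp.2, y⟫_ℂ =
        ⟪u, A 0 + B ⟨y, hyB⟩⟫_ℂ + ⟪v, C 0 + D ⟨y, hyD⟩⟫_ℂ :=
      h ⟨WithLp.toLp 2 (0, y), ⟨⟨A.domain.zero_mem, C.domain.zero_mem⟩, ⟨hyB, hyD⟩⟩⟩
    simpa [add_comm] using hy

theorem mem_adjoint_blockOpL {u v f g : H} (hf : ColumnAdjointEq A C u v f)
    (hg : ColumnAdjointEq D B v u g) :
    WithLp.toLp 2 (u, v) ∈ (blockOpL A B C D)†.domain := by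
  refine mem_adjoint_domain_of_exists _ ⟨WithLp.toLp 2 (f, g), ?_⟩
  rintro ⟨⟨y₁, y₂⟩, hy⟩
  obtain ⟨⟨hy₁A, hy₁C⟩, hy₂B, hy₂D⟩ := toLp_mem_domain_blockOpL_iff.mp hy
  show ⟪f, y₁⟫_ℂ + ⟪g, y₂⟫_ℂ =
    ⟪u, A ⟨y₁, hy₁A⟩ + B ⟨y₂, hy₂B⟩⟫_ℂ + ⟪v, C ⟨y₁, hy₁C⟩ + D ⟨y₂, hy₂D⟩⟫_ℂ
  rw [hf _ hy₁A hy₁C, hg _ hy₂D hy₂B, inner_add_right, inner_add_right]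
  ring

theorem isSelfAdjoint_blockOpL_iff (hA : A.IsFormalAdjoint A) (hD : D.IsFormalAdjoint D)
    (hCB : C.IsFormalAdjoint B)
    (hdense : Dense ((blockOpL A B C D).domain : Set (WithLp 2 (H × H)))) :
    IsSelfAdjoint (blockOpL A B C D) ↔ BlockAdjointDomainLe A B C D := by
  rw [isSelfAdjoint_iff_adjoint_domain_le hdense (isFormalAdjoint_blockOpL hA hD hCB)]
  refine ⟨fun h u v f g hf hg => h (mem_adjoint_blockOpL hf hg), ?_⟩
  rintro h ⟨⟨u, v⟩⟩ hp
  obtain ⟨hf, hg⟩ := adjoint_blockOpL_columnAdjointEq hdense hp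
  exact h _ _ _ _ hf hg

end BlockMatrix

section Schur

variable {H : Type*} [NormedAddCommGroup H] [InnerProductSpace ℂ H]
  {A B C D : H →ₗ.[ℂ] H} {lam : ℂ} {R S : H →L[ℂ] H}

/-- `B - A S D` on its natural domain; for `S = (B* - λ̄)⁻¹` this is `B - A(B* - λ̄)⁻¹D`. -/
noncomputable def schurOffDiag (B A D : H →ₗ.[ℂ] H) (S : H →L[ℂ] H) : H →ₗ.[ℂ] H :=
  B - pcomp A ((S : H →ₗ[ℂ] H).compPMap D)

theorem domain_schurOffDiag (hBD : B.domain ≤ D.domain) (hSA : ∀ z, S z ∈ A.domain) :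
    (schurOffDiag B A D S).domain = B.domain :=
  le_antisymm inf_le_left fun _ hy => ⟨hy, hBD hy, hSA _⟩

theorem schurOffDiag_apply {y : H} (hy : y ∈ (schurOffDiag B A D S).domain)
    (hyD : y ∈ D.domain) (hSDy : S (D ⟨y, hyD⟩) ∈ A.domain) :
    schurOffDiag B A D S ⟨y, hy⟩ = B ⟨y, hy.1⟩ - A ⟨S (D ⟨y, hyD⟩), hSDy⟩ :=
  rfl

theorem dense_domain_schurOffDiag (hB : Dense (B.domain : Set H)) (hBD : B.domain ≤ D.domain)
    (hSA : ∀ z, S z ∈ A.domain) : Dense ((schurOffDiag B A D S).domain : Set H) := by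
  rwa [domain_schurOffDiag hBD hSA]

theorem isFormalAdjoint_schurOffDiag (hA : A.IsFormalAdjoint A) (hD : D.IsFormalAdjoint D)
    (hCB : C.IsFormalAdjoint B) (hR : IsResolventAt B lam R) (hS : IsResolventAt C (conj lam) S)
    (hCA : C.domain ≤ A.domain) (hBD : B.domain ≤ D.domain) :
    (schurOffDiag C D A R).IsFormalAdjoint (schurOffDiag B A D S) := by
  rintro ⟨u, hu⟩ ⟨y, hy⟩
  have huA : u ∈ A.domain := hCA hu.1
  have hyD : y ∈ D.domain := hBD hy.1
  rw [schurOffDiag_apply hu huA (hBD (hR.mem _)), schurOffDiag_apply hy hyD (hCA (hS.mem _)),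
    inner_sub_left, inner_sub_right, hCB ⟨u, hu.1⟩ ⟨y, hy.1⟩]
  congr 1
  calc ⟪D ⟨R (A ⟨u, huA⟩), _⟩, y⟫_ℂ = ⟪R (A ⟨u, huA⟩), D ⟨y, hyD⟩⟫_ℂ := hD ⟨_, _⟩ ⟨y, hyD⟩
    _ = ⟪A ⟨u, huA⟩, S (D ⟨y, hyD⟩)⟫_ℂ := hR.inner_resolvent_left hCB hS _ _
    _ = ⟪u, A ⟨S (D ⟨y, hyD⟩), _⟩⟫_ℂ := hA ⟨u, huA⟩ ⟨_, _⟩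

theorem ColumnAdjointEq.inner_apply_resolvent {u v f : H} (hf : ColumnAdjointEq A C u v f)
    (hCB : C.IsFormalAdjoint B) (hR : IsResolventAt B lam R) (hS : IsResolventAt C (conj lam) S)
    (hCA : C.domain ≤ A.domain) (z : H) :
    ⟪u, A ⟨S z, hCA (hS.mem z)⟩⟫_ℂ = ⟪R (f - lam • v) - v, z⟫_ℂ := by
  have h := hf (S z) (hCA (hS.mem z)) (hS.mem z)
  rw [hS.apply_resolvent_eq, inner_add_right, inner_smul_right, ← hR.inner_resolvent_left hCB hS,
    ← hR.inner_resolvent_left hCB hS] at h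
  rw [_root_.map_sub, _root_.map_smul, inner_sub_left, inner_sub_left, inner_smul_left]
  linear_combination -h

variable [CompleteSpace H]

theorem blockAdjointDomainLe_of_adjoint_domain_le (hA : A.IsFormalAdjoint A)
    (hD : D.IsFormalAdjoint D) (hCB : C.IsFormalAdjoint B) (hR : IsResolventAt B lam R)
    (hS : IsResolventAt C (conj lam) S) (hCA : C.domain ≤ A.domain) (hBD : B.domain ≤ D.domain)
    (h : (schurOffDiag B A D S)†.domain ≤ C.domain) : BlockAdjointDomainLe A B C D := by
  intro u v f g hf hg
  have key := hf.inner_apply_resolvent hCB hR hS hCA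
  set w := R (f - lam • v)
  have hwD : w ∈ D.domain := hBD (hR.mem _)
  have huC : u ∈ C.domain := h <| mem_adjoint_domain_of_exists u ⟨g - D ⟨w, hwD⟩, ?_⟩
  · have hv : v = w - R (A ⟨u, hCA huC⟩) := by
      have hwv : w - v = R (A ⟨u, hCA huC⟩) := ext_inner_right ℂ fun z => by
        rw [← key z, hR.inner_resolvent_left hCB hS]
        exact (hA ⟨u, hCA huC⟩ ⟨S z, hCA (hS.mem z)⟩).symm
      rw [← hwv, sub_sub_cancel]
    have hvB : v ∈ B.domain := hv ▸ sub_mem (hR.mem _) (hR.mem _)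
    exact ⟨⟨hCA huC, huC⟩, hvB, hBD hvB⟩
  · rintro ⟨y, hy⟩
    have hyD : y ∈ D.domain := hBD hy.1
    rw [schurOffDiag_apply hy hyD (hCA (hS.mem _)), inner_sub_left, inner_sub_right, key,
      hg y hyD hy.1, hD ⟨w, hwD⟩ ⟨y, hyD⟩, inner_sub_left]
    ring

theorem adjoint_domain_le_of_blockAdjointDomainLe (hAc : A.IsClosable)
    (hS : IsResolventAt C (conj lam) S) (hB : Dense (B.domain : Set H))
    (hCA : C.domain ≤ A.domain) (hBD : B.domain ≤ D.domain) (h : BlockAdjointDomainLe A B C D) :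
    (schurOffDiag B A D S)†.domain ≤ C.domain := by
  intro u hu
  have hSA : ∀ z, S z ∈ A.domain := fun z => hCA (hS.mem z)
  -- `A S` is bounded, so `v := -(A S)* u` is defined although `u` is not yet known to lie in `D(A)`
  set v := -(hAc.compCLM S hSA).adjoint u
  have hv : ∀ z, ⟪v, z⟫_ℂ = -⟪u, A ⟨S z, hSA z⟩⟫_ℂ := fun z => by
    rw [inner_neg_left, ContinuousLinearMap.adjoint_inner_left, IsClosable.compCLM_apply]
  refine (h u v (lam • v) ((schurOffDiag B A D S)† ⟨u, hu⟩) (fun x hxA hxC => ?_)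
    (fun y hyD hyB => ?_)).1.2
  · have hAx : A ⟨x, hxA⟩ = A ⟨S (C ⟨x, hxC⟩ - conj lam • x), hSA _⟩ := by
      congr 2
      exact (hS.left_inv ⟨x, hxC⟩).symm
    rw [hAx, ← neg_neg ⟪u, _⟫_ℂ, ← hv, inner_sub_right, inner_smul_right, inner_smul_left]
    ring
  · have hy : y ∈ (schurOffDiag B A D S).domain := ⟨hyB, hyD, hSA _⟩
    rw [adjoint_isFormalAdjoint (dense_domain_schurOffDiag hB hBD hSA) ⟨u, hu⟩ ⟨y, hy⟩,
      schurOffDiag_apply hy hyD (hSA _), inner_sub_right, hv]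
    ring

theorem blockAdjointDomainLe_iff_adjoint_schurOffDiag_eq (hA : A.IsFormalAdjoint A)
    (hD : D.IsFormalAdjoint D) (hAc : A.IsClosable) (hCB : C.IsFormalAdjoint B)
    (hR : IsResolventAt B lam R) (hS : IsResolventAt C (conj lam) S)
    (hB : Dense (B.domain : Set H)) (hCA : C.domain ≤ A.domain) (hBD : B.domain ≤ D.domain) :
    BlockAdjointDomainLe A B C D ↔ (schurOffDiag B A D S)† = schurOffDiag C D A R := by
  have hle : schurOffDiag C D A R ≤ (schurOffDiag B A D S)† :=
    (isFormalAdjoint_schurOffDiag hA hD hCB hR hS hCA hBD).symm.le_adjoint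
      (dense_domain_schurOffDiag hB hBD fun z => hCA (hS.mem z))
  have hdom : (schurOffDiag C D A R).domain = C.domain :=
    domain_schurOffDiag hCA fun z => hBD (hR.mem z)
  refine ⟨fun h => (eq_of_le_of_domain_eq hle (le_antisymm hle.1 ?_)).symm, fun h => ?_⟩
  · exact (adjoint_domain_le_of_blockAdjointDomainLe hAc hS hB hCA hBD h).trans hdom.ge
  · exact blockAdjointDomainLe_of_adjoint_domain_le hA hD hCB hR hS hCA hBD
      ((congrArg LinearPMap.domain h).trans hdom).le

end Schur

theorem statement16_general {H : Type*} [NormedAddCommGroup H] [InnerProductSpace ℂ H] [CompleteSpace H]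
    (A B D : H →ₗ.[ℂ] H)
    (hAd : Dense (A.domain : Set H)) (hBd : Dense (B.domain : Set H))
    (hBad : Dense (B.adjoint.domain : Set H)) (hDd : Dense (D.domain : Set H))
    (hAc : A.IsClosable) (hDc : D.IsClosable)
    (hAsym : A ≤ A.adjoint) (hDsym : D ≤ D.adjoint)
    (hdense : Dense ((blockOpL A B B.adjoint D).domain : Set (WithLp 2 (H × H))))
    (hres : (resolventSet B).Nonempty)
    (hBA : B.adjoint.domain ≤ A.domain) (hBD : B.domain ≤ D.domain) :
    (IsSelfAdjoint (blockOpL A B B.adjoint D) ↔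
      ∃ (lam : ℂ) (R S : H →L[ℂ] H), IsResolventAt B lam R ∧
        IsResolventAt B.adjoint (starRingEnd ℂ lam) S ∧
        (B - pcomp A ((S : H →ₗ[ℂ] H).compPMap D)).adjoint =
          B.adjoint - pcomp D ((R : H →ₗ[ℂ] H).compPMap A)) ∧
    (IsSelfAdjoint (blockOpL A B B.adjoint D) ↔
      ∃ (lam : ℂ) (R S : H →L[ℂ] H), IsResolventAt B lam R ∧
        IsResolventAt B.adjoint (starRingEnd ℂ lam) S ∧
        (B.adjoint - pcomp D ((R : H →ₗ[ℂ] H).compPMap A)).adjoint =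
          B - pcomp A ((S : H →ₗ[ℂ] H).compPMap D)) ∧
    (IsSelfAdjoint (blockOpL A B B.adjoint D) →
      ∀ (lam : ℂ) (R S : H →L[ℂ] H), IsResolventAt B lam R →
        IsResolventAt B.adjoint (starRingEnd ℂ lam) S →
        ((B - pcomp A ((S : H →ₗ[ℂ] H).compPMap D)).adjoint =
            B.adjoint - pcomp D ((R : H →ₗ[ℂ] H).compPMap A) ∧
          (B.adjoint - pcomp D ((R : H →ₗ[ℂ] H).compPMap A)).adjoint =
            B - pcomp A ((S : H →ₗ[ℂ] H).compPMap D))) := by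
  have hA := isFormalAdjoint_of_le_adjoint hAd hAsym
  have hD := isFormalAdjoint_of_le_adjoint hDd hDsym
  have hCB : B†.IsFormalAdjoint B := adjoint_isFormalAdjoint hBd
  have hsa := isSelfAdjoint_blockOpL_iff hA hD hCB hdense
  have hb : ∀ lam R S, IsResolventAt B lam R → IsResolventAt B† (conj lam) S →
      (IsSelfAdjoint (blockOpL A B B† D) ↔ (schurOffDiag B A D S)† = schurOffDiag B† D A R) :=
    fun lam R S hR hS =>
      hsa.trans (blockAdjointDomainLe_iff_adjoint_schurOffDiag_eq hA hD hAc hCB hR hS hBd hBA hBD)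
  have hc : ∀ lam R S, IsResolventAt B lam R → IsResolventAt B† (conj lam) S →
      (IsSelfAdjoint (blockOpL A B B† D) ↔ (schurOffDiag B† D A R)† = schurOffDiag B A D S) :=
    fun lam R S hR hS => hsa.trans <| blockAdjointDomainLe_swap_iff.symm.trans <|
      blockAdjointDomainLe_iff_adjoint_schurOffDiag_eq hD hA hDc hCB.symm hS
        ((Complex.conj_conj lam).symm ▸ hR) hBad hBD hBA
  obtain ⟨lam, R, hR⟩ := hres
  have hS := hR.adjoint hBd
  exact ⟨⟨fun h => ⟨lam, R, _, hR, hS, (hb _ _ _ hR hS).1 h⟩,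
      fun ⟨_, _, _, hR, hS, h⟩ => (hb _ _ _ hR hS).2 h⟩,
    ⟨fun h => ⟨lam, R, _, hR, hS, (hc _ _ _ hR hS).1 h⟩,
      fun ⟨_, _, _, hR, hS, h⟩ => (hc _ _ _ hR hS).2 h⟩,
    fun h _ _ _ hR hS => ⟨(hb _ _ _ hR hS).1 h, (hc _ _ _ hR hS).1 h⟩⟩

theorem statement16 {H : Type*} [NormedAddCommGroup H] [InnerProductSpace ℂ H] [CompleteSpace H]
    (A B D : H →ₗ.[ℂ] H)
    (hAd : Dense (A.domain : Set H)) (hBd : Dense (B.domain : Set H))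
    (hBad : Dense (B.adjoint.domain : Set H)) (hDd : Dense (D.domain : Set H))
    (hAc : A.IsClosable) (hBc : B.IsClosable) (hBac : B.adjoint.IsClosable)
    (hDc : D.IsClosable)
    (hAsym : A ≤ A.adjoint) (hBsym : B ≤ B.adjoint.adjoint) (hDsym : D ≤ D.adjoint)
    (hdense : Dense ((blockOpL A B B.adjoint D).domain : Set (WithLp 2 (H × H))))
    (hBclosed : B.IsClosed) (hres : (resolventSet B).Nonempty)
    (hBA : B.adjoint.domain ≤ A.domain) (hBD : B.domain ≤ D.domain) :
    (IsSelfAdjoint (blockOpL A B B.adjoint D) ↔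
      ∃ (lam : ℂ) (R S : H →L[ℂ] H), IsResolventAt B lam R ∧
        IsResolventAt B.adjoint (starRingEnd ℂ lam) S ∧
        (B - pcomp A ((S : H →ₗ[ℂ] H).compPMap D)).adjoint =
          B.adjoint - pcomp D ((R : H →ₗ[ℂ] H).compPMap A)) ∧
    (IsSelfAdjoint (blockOpL A B B.adjoint D) ↔
      ∃ (lam : ℂ) (R S : H →L[ℂ] H), IsResolventAt B lam R ∧
        IsResolventAt B.adjoint (starRingEnd ℂ lam) S ∧
        (B.adjoint - pcomp D ((R : H →ₗ[ℂ] H).compPMap A)).adjoint =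
          B - pcomp A ((S : H →ₗ[ℂ] H).compPMap D)) ∧
    (IsSelfAdjoint (blockOpL A B B.adjoint D) →
      ∀ (lam : ℂ) (R S : H →L[ℂ] H), IsResolventAt B lam R →
        IsResolventAt B.adjoint (starRingEnd ℂ lam) S →
        ((B - pcomp A ((S : H →ₗ[ℂ] H).compPMap D)).adjoint =
            B.adjoint - pcomp D ((R : H →ₗ[ℂ] H).compPMap A) ∧
          (B.adjoint - pcomp D ((R : H →ₗ[ℂ] H).compPMap A)).adjoint =
            B - pcomp A ((S : H →ₗ[ℂ] H).compPMap D))) :=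
  statement16_general A B D hAd hBd hBad hDd hAc hDc hAsym hDsym hdense hres hBA hBD

end BlockOp
end
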